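/- arXiv:1612.01005 — 4 statements merged into one kernel-verified Lean document; each statement's English description precedes it below -/
import Mathlib

section
/- Let C be a d-cone: an additive commutative monoid that is a module over the semiring ℝ≥0 of nonnegative reals, with a partial order such that every directed subset of C has a least upper bound; x ≤ y implies x + z ≤ y + z and r•x ≤ r•y for all z ∈ C, r ∈ ℝ≥0; if D ⊆ C is directed with least upper bound a, then a + b is the least upper bound of { x + b | x ∈ D } and r•a is the least upper bound of { r•x | x ∈ D }; and for every x ∈ C and every nonempty bounded S ⊆ ℝ≥0, (sup S)•x is the least upper bound of { t•x | t ∈ S }. Let X ⊆ C be Scott-closed and convex (t•a + (1−t)•b ∈ X whenever a, b ∈ X and t ∈ [0,1]). Define the lower Minkowski functional ν_X : C → ℝ≥0∞ by ν_X(a) = inf { (r : ℝ≥0∞) | r ∈ ℝ≥0, a ∈ r•X }, where r•X = { r•x | x ∈ X } and the infimum of the empty set is ∞. Then: (1) ν_X is monotone; if D ⊆ C is directed with least upper bound a then ν_X(a) = ⨆_{x ∈ D} ν_X(x); ν_X(r•a) = r·ν_X(a) for every r ∈ ℝ≥0 with r > 0; and ν_X(a + b) ≤ ν_X(a) + ν_X(b).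 (2) If 0 < ν_X(a) < ∞ then there exist x ∈ X and s ∈ ℝ≥0 with (s : ℝ≥0∞) = ν_X(a) and a = s•x. (3) X = { a ∈ C | ν_X(a) ≤ 1 }. -/
open scoped NNReal ENNReal

/-- A subset of a preorder is Scott-open if it is an upper set and it meets every directed
subset whose least upper bound lies in it. -/
def ScottOpen {α : Type*} [Preorder α] (U : Set α) : Prop :=
  IsUpperSet U ∧ ∀ D : Set α, D.Nonempty → DirectedOn (· ≤ ·) D →
    ∀ a : α, IsLUB D a → a ∈ U → (D ∩ U).Nonempty

/-- A subset of a preorder is Scott-closed if it is a lower set containing the least upper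
bound of each of its directed subsets that possesses one. -/
def ScottClosed {α : Type*} [Preorder α] (S : Set α) : Prop :=
  IsLowerSet S ∧ ∀ D : Set α, D ⊆ S → D.Nonempty → DirectedOn (· ≤ ·) D →
    ∀ a : α, IsLUB D a → a ∈ S

/-- The Scott closure of a set: the intersection of all Scott-closed supersets. -/
def scottClosure {α : Type*} [Preorder α] (S : Set α) : Set α :=
  ⋂₀ {T : Set α | ScottClosed T ∧ S ⊆ T}

/-- The lower Minkowski functional of a subset `X` of a cone: the infimum of the scalars
`r` with `a ∈ r • X` (with value `∞` if there is no such scalar). -/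
noncomputable def mink {C : Type*} [AddCommMonoid C] [Module ℝ≥0 C]
    (X : Set C) (a : C) : ℝ≥0∞ :=
  sInf {c : ℝ≥0∞ | ∃ r : ℝ≥0, c = (r : ℝ≥0∞) ∧ ∃ x ∈ X, a = r • x}

/-- Properties of the lower Minkowski functional of a Scott-closed convex subset of a
d-cone: it is a Scott-continuous seminorm, values in `(0,∞)` are attained, and `X` is
recovered as the set where the functional is at most `1`. -/
theorem minkowski_functional_properties {C : Type*}
    [AddCommMonoid C] [Module ℝ≥0 C] [PartialOrder C]
    (hdcpo : ∀ D : Set C, D.Nonempty → DirectedOn (· ≤ ·) D → ∃ a : C, IsLUB D a)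
    (haddmono : ∀ x y z : C, x ≤ y → x + z ≤ y + z)
    (hsmulmono : ∀ (r : ℝ≥0) (x y : C), x ≤ y → r • x ≤ r • y)
    (haddscott : ∀ D : Set C, D.Nonempty → DirectedOn (· ≤ ·) D → ∀ a : C, IsLUB D a →
      ∀ b : C, IsLUB ((fun x => x + b) '' D) (a + b))
    (hsmulscott : ∀ D : Set C, D.Nonempty → DirectedOn (· ≤ ·) D → ∀ a : C, IsLUB D a →
      ∀ r : ℝ≥0, IsLUB ((fun x => r • x) '' D) (r • a))
    (hscalar : ∀ x : C, ∀ S : Set ℝ≥0, S.Nonempty → BddAbove S →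
      IsLUB ((fun t => t • x) '' S) (sSup S • x))
    (X : Set C) (hXc : ScottClosed X)
    (hXconv : ∀ a ∈ X, ∀ b ∈ X, ∀ t : ℝ≥0, t ≤ 1 → t • a + (1 - t) • b ∈ X) :
    (Monotone (mink X) ∧
      (∀ D : Set C, D.Nonempty → DirectedOn (· ≤ ·) D → ∀ a : C, IsLUB D a →
        mink X a = ⨆ x ∈ D, mink X x) ∧
      (∀ r : ℝ≥0, 0 < r → ∀ a : C, mink X (r • a) = (r : ℝ≥0∞) * mink X a) ∧
      (∀ a b : C, mink X (a + b) ≤ mink X a + mink X b)) ∧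
    (∀ a : C, 0 < mink X a → mink X a < ⊤ →
      ∃ x ∈ X, ∃ s : ℝ≥0, (s : ℝ≥0∞) = mink X a ∧ a = s • x) ∧
    X = {a : C | mink X a ≤ 1} := by
  -- scalar multiplication by `t ≤ 1` shrinks
  have hshrink : ∀ (t : ℝ≥0), t ≤ 1 → ∀ x : C, t • x ≤ x := by
    intro t ht x
    have h := hscalar x {t, 1} ⟨t, by simp⟩ (Set.Finite.bddAbove (by simp))
    have hs : sSup ({t, 1} : Set ℝ≥0) = 1 := by
      rw [csSup_pair]; exact max_eq_right ht
    rw [hs, one_smul] at h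
    exact h.1 ⟨t, by simp, rfl⟩
  -- 0 is a bottom element
  have hbot : ∀ x : C, (0 : C) ≤ x := by
    intro x
    have := hshrink 0 zero_le_one x
    rwa [zero_smul] at this
  -- downscaling stays in X
  have hdown : ∀ x ∈ X, ∀ t : ℝ≥0, t ≤ 1 → t • x ∈ X := by
    intro x hx t ht
    exact hXc.1 (hshrink t ht x) hx
  -- scalar monotonicity
  have hsmono : ∀ (u v : ℝ≥0), u ≤ v → ∀ x : C, u • x ≤ v • x := by
    intro u v huv x
    rcases eq_or_ne v 0 with rfl | hv
    · have : u = 0 := le_antisymm huv zero_le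
      rw [this]
    · have h1 : (u / v) • (v • x) = u • x := by
        rw [smul_smul, div_mul_cancel₀ _ hv]
      calc u • x = (u / v) • (v • x) := h1.symm
        _ ≤ v • x := hshrink _ ((div_le_one (pos_iff_ne_zero.mpr hv)).mpr huv) _
  -- membership bound
  have hle_of_mem : ∀ (a : C) (u : ℝ≥0), (∃ x ∈ X, a = u • x) → mink X a ≤ u := by
    rintro a u ⟨x, hx, hax⟩
    exact sInf_le ⟨u, rfl, x, hx, hax⟩
  -- strict bound gives membership
  have hmem_of_lt : ∀ (a : C) (u : ℝ≥0), mink X a < (u : ℝ≥0∞) → ∃ x ∈ X, a = u • x := by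
    intro a u h
    have hu : u ≠ 0 := by
      rintro rfl
      simp at h
    obtain ⟨c, hc, hcu⟩ := sInf_lt_iff.mp h
    obtain ⟨r, rfl, x, hx, hax⟩ := hc
    have hru : r ≤ u := (ENNReal.coe_lt_coe.mp hcu).le
    refine ⟨(u⁻¹ * r) • x, hdown x hx _ ?_, ?_⟩
    · calc u⁻¹ * r ≤ u⁻¹ * u := mul_le_mul_right hru _
        _ = 1 := inv_mul_cancel₀ hu
    · rw [hax, smul_smul, ← mul_assoc, mul_inv_cancel₀ hu, one_mul]
  -- monotonicity
  have hmono : Monotone (mink X) := by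
    intro a b hab
    apply sInf_le_sInf
    rintro c ⟨r, rfl, x, hx, hbx⟩
    rcases eq_or_ne r 0 with rfl | hr
    · rw [zero_smul] at hbx
      refine ⟨0, rfl, x, hx, ?_⟩
      rw [zero_smul]
      exact le_antisymm (hbx ▸ hab) (hbot a)
    · refine ⟨r, rfl, r⁻¹ • a, hXc.1 ?_ hx, ?_⟩
      · calc r⁻¹ • a ≤ r⁻¹ • b := hsmulmono _ _ _ hab
          _ = x := by rw [hbx, smul_smul, inv_mul_cancel₀ hr, one_smul]
      · rw [smul_smul, mul_inv_cancel₀ hr, one_smul]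
  -- Scott continuity
  have hcont : ∀ D : Set C, D.Nonempty → DirectedOn (· ≤ ·) D → ∀ a : C, IsLUB D a →
      mink X a = ⨆ x ∈ D, mink X x := by
    intro D hD hdir a ha
    refine le_antisymm ?_ (iSup₂_le fun x hx => hmono (ha.1 hx))
    set M := ⨆ x ∈ D, mink X x with hM
    apply ENNReal.le_of_forall_pos_le_add
    intro ε hε hMtop
    set u : ℝ≥0 := M.toNNReal + ε with hu
    have hcoeu : (u : ℝ≥0∞) = M + ε := by
      rw [hu, ENNReal.coe_add, ENNReal.coe_toNNReal hMtop.ne]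
    have hMu : M < (u : ℝ≥0∞) := by
      rw [hcoeu]
      exact ENNReal.lt_add_right hMtop.ne (by exact_mod_cast hε.ne')
    have hu0 : u ≠ 0 := by
      intro h
      rw [h] at hMu
      simp at hMu
    have hkey : ∀ x ∈ D, u⁻¹ • x ∈ X := by
      intro x hx
      obtain ⟨y, hy, hxy⟩ := hmem_of_lt x u (lt_of_le_of_lt (le_biSup _ hx) hMu)
      have : u⁻¹ • x = y := by rw [hxy, smul_smul, inv_mul_cancel₀ hu0, one_smul]
      rw [this]; exact hy
    have hdir' : DirectedOn (· ≤ ·) ((fun x => u⁻¹ • x) '' D) := by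
      rintro _ ⟨x, hx, rfl⟩ _ ⟨y, hy, rfl⟩
      obtain ⟨z, hz, hxz, hyz⟩ := hdir x hx y hy
      exact ⟨_, ⟨z, hz, rfl⟩, hsmulmono _ _ _ hxz, hsmulmono _ _ _ hyz⟩
    have hmem : u⁻¹ • a ∈ X :=
      hXc.2 _ (by rintro _ ⟨x, hx, rfl⟩; exact hkey x hx) (hD.image _) hdir' _
        (hsmulscott D hD hdir a ha u⁻¹)
    have h1 : mink X a ≤ (u : ℝ≥0∞) :=
      hle_of_mem a u ⟨u⁻¹ • a, hmem, by rw [smul_smul, mul_inv_cancel₀ hu0, one_smul]⟩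
    rwa [hcoeu] at h1
  -- homogeneity, one inequality
  have hhom_le : ∀ r : ℝ≥0, 0 < r → ∀ a : C, mink X (r • a) ≤ (r : ℝ≥0∞) * mink X a := by
    intro r hr a
    have h0 : ((r : ℝ≥0∞)) ≠ 0 := by exact_mod_cast hr.ne'
    have ht : ((r : ℝ≥0∞)) ≠ ⊤ := ENNReal.coe_ne_top
    calc mink X (r • a)
        ≤ ⨅ c ∈ {c : ℝ≥0∞ | ∃ t : ℝ≥0, c = (t : ℝ≥0∞) ∧ ∃ x ∈ X, a = t • x},
            (r : ℝ≥0∞) * c := by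
          refine le_iInf₂ fun c hc => ?_
          obtain ⟨t, rfl, x, hx, rfl⟩ := hc
          have := hle_of_mem (r • t • x) (r * t) ⟨x, hx, by rw [smul_smul]⟩
          rwa [ENNReal.coe_mul] at this
      _ = (r : ℝ≥0∞) * mink X a := by
          rw [mink, sInf_eq_iInf, ENNReal.mul_iInf_of_ne h0 ht]
          exact iInf_congr fun c => (ENNReal.mul_iInf_of_ne h0 ht).symm
  have hhom : ∀ r : ℝ≥0, 0 < r → ∀ a : C, mink X (r • a) = (r : ℝ≥0∞) * mink X a := by
    intro r hr a
    refine le_antisymm (hhom_le r hr a) ?_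
    have h2 := hhom_le r⁻¹ (by positivity) (r • a)
    rw [smul_smul, inv_mul_cancel₀ hr.ne', one_smul] at h2
    calc (r : ℝ≥0∞) * mink X a ≤ (r : ℝ≥0∞) * ((r⁻¹ : ℝ≥0) * mink X (r • a)) :=
          mul_le_mul_right h2 _
      _ = mink X (r • a) := by
          rw [← mul_assoc, ← ENNReal.coe_mul, mul_inv_cancel₀ hr.ne', ENNReal.coe_one, one_mul]
  -- subadditivity
  have hsub : ∀ a b : C, mink X (a + b) ≤ mink X a + mink X b := by
    intro a b
    have key : ∀ c ∈ {c : ℝ≥0∞ | ∃ t : ℝ≥0, c = (t : ℝ≥0∞) ∧ ∃ x ∈ X, a = t • x},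
        ∀ d ∈ {c : ℝ≥0∞ | ∃ t : ℝ≥0, c = (t : ℝ≥0∞) ∧ ∃ x ∈ X, b = t • x},
        mink X (a + b) ≤ c + d := by
      rintro _ ⟨t, rfl, x, hx, rfl⟩ _ ⟨s, rfl, y, hy, rfl⟩
      rw [← ENNReal.coe_add]
      rcases eq_or_ne (t + s) 0 with hts | hts
      · obtain ⟨rfl, rfl⟩ := add_eq_zero.mp hts
        refine hle_of_mem _ _ ⟨x, hx, ?_⟩
        simp
      · have ht'le : t / (t + s) ≤ 1 := (div_le_one (pos_iff_ne_zero.mpr hts)).mpr le_self_add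
        have hsubt : 1 - t / (t + s) = s / (t + s) := by
          have h1 : s / (t + s) + t / (t + s) = 1 := by
            rw [← add_div, add_comm, div_self hts]
          exact (eq_tsub_of_add_eq h1).symm
        have hz := hXconv x hx y hy _ ht'le
        rw [hsubt] at hz
        refine hle_of_mem _ _ ⟨_, hz, ?_⟩
        rw [smul_add, smul_smul, smul_smul, mul_comm (t+s) (t / (t+s)),
          div_mul_cancel₀ _ hts, mul_comm (t+s) (s / (t+s)), div_mul_cancel₀ _ hts]
    have hstep : ∀ c ∈ {c : ℝ≥0∞ | ∃ t : ℝ≥0, c = (t : ℝ≥0∞) ∧ ∃ x ∈ X, a = t • x},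
        mink X (a + b) ≤ c + mink X b := by
      intro c hc
      have heq : c + mink X b
          = ⨅ d ∈ {c : ℝ≥0∞ | ∃ t : ℝ≥0, c = (t : ℝ≥0∞) ∧ ∃ x ∈ X, b = t • x}, (d + c) := by
        rw [add_comm, mink]
        exact ENNReal.sInf_add
      rw [heq]
      exact le_iInf₂ fun d hd => (key c hc d hd).trans_eq (add_comm c d)
    have heq2 : mink X a + mink X b
        = ⨅ c ∈ {c : ℝ≥0∞ | ∃ t : ℝ≥0, c = (t : ℝ≥0∞) ∧ ∃ x ∈ X, a = t • x},
            (c + mink X b) := by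
      rw [mink]
      exact ENNReal.sInf_add
    rw [heq2]
    exact le_iInf₂ hstep
  -- attainment
  have hatt : ∀ a : C, 0 < mink X a → mink X a < ⊤ →
      ∃ x ∈ X, ∃ s : ℝ≥0, (s : ℝ≥0∞) = mink X a ∧ a = s • x := by
    intro a h0 htop
    set s := (mink X a).toNNReal with hsdef
    have hs' : (s : ℝ≥0∞) = mink X a := ENNReal.coe_toNNReal htop.ne
    have hspos : 0 < s := ENNReal.toNNReal_pos h0.ne' htop.ne
    have hmem : ∀ u ∈ Set.Ioo (0 : ℝ≥0) s⁻¹, u • a ∈ X := by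
      rintro u ⟨hu0, hus⟩
      have h1 : mink X a < ((u⁻¹ : ℝ≥0) : ℝ≥0∞) := by
        rw [← hs']
        exact_mod_cast (by simpa using inv_strictAnti₀ hu0 hus : s < u⁻¹)
      obtain ⟨x, hx, hax⟩ := hmem_of_lt a u⁻¹ h1
      have : u • a = x := by rw [hax, smul_smul, mul_inv_cancel₀ hu0.ne', one_smul]
      rw [this]; exact hx
    have hne : (Set.Ioo (0 : ℝ≥0) s⁻¹).Nonempty := Set.nonempty_Ioo.mpr (by positivity)
    have hlub := hscalar a _ hne bddAbove_Ioo
    rw [csSup_Ioo (by positivity)] at hlub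
    have hdir : DirectedOn (· ≤ ·) ((fun t => t • a) '' Set.Ioo (0 : ℝ≥0) s⁻¹) := by
      rintro _ ⟨u, hu, rfl⟩ _ ⟨v, hv, rfl⟩
      rcases le_total u v with h | h
      · exact ⟨_, ⟨v, hv, rfl⟩, hsmono _ _ h a, le_rfl⟩
      · exact ⟨_, ⟨u, hu, rfl⟩, le_rfl, hsmono _ _ h a⟩
    have hXmem : s⁻¹ • a ∈ X :=
      hXc.2 _ (by rintro _ ⟨u, hu, rfl⟩; exact hmem u hu) (hne.image _) hdir _ hlub
    exact ⟨s⁻¹ • a, hXmem, s, hs', by rw [smul_smul, mul_inv_cancel₀ hspos.ne', one_smul]⟩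
  refine ⟨⟨hmono, hcont, hhom, hsub⟩, hatt, ?_⟩
  ext a
  simp only [Set.mem_setOf_eq]
  constructor
  · intro ha
    have := hle_of_mem a 1 ⟨a, ha, (one_smul _ _).symm⟩
    simpa using this
  · intro ha
    rcases lt_or_eq_of_le ha with hlt | heq
    · have h1 : mink X a < ((1 : ℝ≥0) : ℝ≥0∞) := by simpa using hlt
      obtain ⟨x, hx, hax⟩ := hmem_of_lt a 1 h1
      rw [hax, one_smul]; exact hx
    · obtain ⟨x, hx, t, ht1, hax⟩ := hatt a (by rw [heq]; exact one_pos)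
        (by rw [heq]; exact ENNReal.one_lt_top)
      have : t = 1 := by
        rw [heq] at ht1
        exact_mod_cast ht1
      rw [hax, this, one_smul]; exact hx
end

section
/- Let A be a barycentric algebra and let t, u ∈ A. If t +_r u = t +_s u for some reals r, s with 0 < r < s < 1, then t +_p u = t +_q u for all p, q ∈ (0,1). -/
/-- A barycentric algebra: a type with a binary operation `comb r a b` (thought of as
`a +_r b`) for each real `r`, satisfying the barycentric axioms for `r ∈ [0,1]`. -/
structure BarycentricAlgebra (A : Type*) where
  comb : ℝ → A → A → A
  comb_one : ∀ a b : A, comb 1 a b = a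
  comb_same : ∀ r : ℝ, r ∈ Set.Icc (0 : ℝ) 1 → ∀ a : A, comb r a a = a
  comb_sc : ∀ r : ℝ, r ∈ Set.Icc (0 : ℝ) 1 → ∀ a b : A, comb r a b = comb (1 - r) b a
  comb_sa : ∀ p r : ℝ, 0 ≤ p → p < 1 → 0 ≤ r → r < 1 → ∀ a b c : A,
      comb r (comb p a b) c = comb (p * r) a (comb ((r - p * r) / (1 - p * r)) b c)

section Aux

variable {A : Type*} (B : BarycentricAlgebra A) (t u : A)

/-- Scaling toward `u`: `(t +_p u) +_c u = t +_{p c} u`. -/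
lemma bary_mixA (p c : ℝ) (hp0 : 0 ≤ p) (hp1 : p < 1) (hc0 : 0 ≤ c) (hc1 : c < 1) :
    B.comb c (B.comb p t u) u = B.comb (p * c) t u := by
  rw [B.comb_sa p c hp0 hp1 hc0 hc1]
  have hpc : p * c < 1 := by nlinarith
  have hd : (0:ℝ) < 1 - p * c := by linarith
  rw [B.comb_same ((c - p * c) / (1 - p * c))
      ⟨div_nonneg (by nlinarith) hd.le, (div_le_one hd).2 (by linarith)⟩]

/-- Scaling toward `t`: `(t +_m u) +_c t = t +_{1-(1-m)c} u`. -/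
lemma bary_mixB (m c : ℝ) (hm0 : 0 < m) (hm1 : m ≤ 1) (hc0 : 0 ≤ c) (hc1 : c < 1) :
    B.comb c (B.comb m t u) t = B.comb (1 - (1 - m) * c) t u := by
  rw [B.comb_sc m ⟨hm0.le, hm1⟩]
  rw [B.comb_sa (1 - m) c (by linarith) (by linarith) hc0 hc1]
  have hmc : (1 - m) * c < 1 := by nlinarith
  have hd : (0:ℝ) < 1 - (1 - m) * c := by linarith
  rw [B.comb_same ((c - (1 - m) * c) / (1 - (1 - m) * c))
      ⟨div_nonneg (by nlinarith) hd.le, (div_le_one hd).2 (by linarith)⟩]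
  rw [B.comb_sc ((1 - m) * c) ⟨by nlinarith, by linarith⟩]

/-- Affineness: `(t +_p u) +_w (t +_q u) = t +_{wp + (1-w)q} u`. -/
lemma bary_mixC (p q w : ℝ) (hp0 : 0 < p) (hp1 : p < 1) (hq0 : 0 < q) (hq1 : q < 1)
    (hw0 : 0 < w) (hw1 : w < 1) :
    B.comb w (B.comb p t u) (B.comb q t u) = B.comb (w * p + (1 - w) * q) t u := by
  rw [B.comb_sa p w hp0.le hp1 hw0.le hw1]
  have hpw0 : 0 < p * w := by positivity
  have hpw : p * w < 1 := by nlinarith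
  have hd : (0:ℝ) < 1 - p * w := by linarith
  have hα0 : 0 < (w - p * w) / (1 - p * w) := div_pos (by nlinarith) hd
  have hα1 : (w - p * w) / (1 - p * w) < 1 := (div_lt_one hd).2 (by linarith)
  rw [B.comb_sc ((w - p * w) / (1 - p * w)) ⟨hα0.le, hα1.le⟩ u (B.comb q t u)]
  rw [bary_mixA B t u q (1 - (w - p * w) / (1 - p * w)) hq0.le hq1 (by linarith) (by linarith)]
  have hm0 : 0 < q * (1 - (w - p * w) / (1 - p * w)) := by
    have : 0 < 1 - (w - p * w) / (1 - p * w) := by linarith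
    positivity
  have hm1 : q * (1 - (w - p * w) / (1 - p * w)) ≤ 1 := by
    have h1 : 1 - (w - p * w) / (1 - p * w) ≤ 1 := by linarith
    nlinarith
  rw [B.comb_sc (p * w) ⟨hpw0.le, hpw.le⟩ t _]
  rw [bary_mixB B t u (q * (1 - (w - p * w) / (1 - p * w))) (1 - p * w) hm0 hm1
      (by linarith) (by linarith)]
  congr 1
  have hd' : 1 - p * w ≠ 0 := hd.ne'
  have e : (w - p * w) / (1 - p * w) * (1 - p * w) = w - p * w := div_mul_cancel₀ _ hd'
  linear_combination (-q) * e

/-- Shift lemma: from `t +_r u = t +_s u` we can shift any interior point by `w(s-r)`. -/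
lemma bary_shift (r s : ℝ) (hr : 0 < r) (hrs : r < s) (hs : s < 1)
    (h : B.comb r t u = B.comb s t u)
    (x w : ℝ) (hw0 : 0 < w) (hw1 : w < 1) (hx1 : w * r < x) (hx2 : x < 1 - w * (1 - r)) :
    B.comb x t u = B.comb (x + w * (s - r)) t u := by
  have hw' : (0:ℝ) < 1 - w := by linarith
  set a := (x - w * r) / (1 - w) with ha
  have ha0 : 0 < a := div_pos (by linarith) hw'
  have ha1 : a < 1 := (div_lt_one hw').2 (by linarith)
  have hwa : (1 - w) * a = x - w * r := by
    rw [ha]; field_simp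
  calc B.comb x t u = B.comb (w * r + (1 - w) * a) t u := by rw [hwa]; ring_nf
    _ = B.comb w (B.comb r t u) (B.comb a t u) :=
        (bary_mixC B t u r a w hr (hrs.trans hs) ha0 ha1 hw0 hw1).symm
    _ = B.comb w (B.comb s t u) (B.comb a t u) := by rw [h]
    _ = B.comb (w * s + (1 - w) * a) t u :=
        bary_mixC B t u s a w (hr.trans hrs) hs ha0 ha1 hw0 hw1
    _ = B.comb (x + w * (s - r)) t u := by rw [hwa]; ring_nf

end Aux

/-- If `t +_r u = t +_s u` for some `0 < r < s < 1` in a barycentric algebra, then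
`t +_p u = t +_q u` for all `p, q ∈ (0,1)`. -/
theorem comb_const_of_two_equal {A : Type*} (B : BarycentricAlgebra A) (t u : A)
    (r s : ℝ) (hr : 0 < r) (hrs : r < s) (hs : s < 1)
    (h : B.comb r t u = B.comb s t u) :
    ∀ p : ℝ, 0 < p → p < 1 → ∀ q : ℝ, 0 < q → q < 1 →
      B.comb p t u = B.comb q t u := by
  have hr1 : r < 1 := hrs.trans hs
  have hsr : (0:ℝ) < s - r := by linarith
  have key : ∀ p q : ℝ, 0 < p → p < 1 → 0 < q → q < 1 → p < q →
      B.comb p t u = B.comb q t u := by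
    intro p q hp0 hp1 hq0 hq1 hpq
    set m := min p ((1 - q) / (1 - r)) with hmdef
    have hm0 : 0 < m := lt_min hp0 (div_pos (by linarith) (by linarith))
    obtain ⟨n, hn⟩ := exists_nat_gt ((q - p) / ((s - r) * m))
    have hn0 : 0 < (n:ℝ) := lt_trans (div_pos (by linarith) (by positivity)) hn
    set w := (q - p) / (n * (s - r)) with hwdef
    have hw0 : 0 < w := div_pos (by linarith) (by positivity)
    have hwm : w < m := by
      rw [hwdef, div_lt_iff₀ (by positivity)]
      have h1 : q - p < (n:ℝ) * ((s - r) * m) := (div_lt_iff₀ (by positivity)).1 hn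
      nlinarith
    have hwp : w < p := hwm.trans_le (min_le_left _ _)
    have hwq : w * (1 - r) < 1 - q := by
      have h2 : w < (1 - q) / (1 - r) := hwm.trans_le (min_le_right _ _)
      exact (lt_div_iff₀ (by linarith)).1 h2
    have hw1 : w < 1 := hwp.trans hp1
    have hnδ : (n:ℝ) * (w * (s - r)) = q - p := by
      rw [hwdef]; field_simp
    have step : ∀ k : ℕ, k ≤ n → B.comb p t u = B.comb (p + k * (w * (s - r))) t u := by
      intro k hk
      induction k with
      | zero => simp
      | succ k ih =>
        have hk' : k ≤ n := by omega
        have hkn : (k:ℝ) ≤ (n:ℝ) - 1 := by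
          have : ((k:ℝ) + 1) ≤ (n:ℝ) := by exact_mod_cast hk
          linarith
        have hk0 : (0:ℝ) ≤ (k:ℝ) := Nat.cast_nonneg k
        have hwr : w * r < w := by nlinarith
        have hknn : (0:ℝ) ≤ (k:ℝ) * (w * (s - r)) := by positivity
        have hx1 : w * r < p + k * (w * (s - r)) := by linarith
        have hkup : (k:ℝ) * (w * (s - r)) ≤ ((n:ℝ) - 1) * (w * (s - r)) := by
          have hpos : (0:ℝ) < w * (s - r) := by positivity
          exact mul_le_mul_of_nonneg_right hkn hpos.le
        have hx2 : p + k * (w * (s - r)) < 1 - w * (1 - r) := by nlinarith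
        rw [ih hk', bary_shift B t u r s hr hrs hs h (p + k * (w * (s - r))) w
            hw0 hw1 hx1 hx2]
        congr 1
        push_cast
        ring
    have := step n le_rfl
    rw [this]
    congr 1
    linarith
  intro p hp0 hp1 q hq0 hq1
  rcases lt_trichotomy p q with hpq | hpq | hpq
  · exact key p q hp0 hp1 hq0 hq1 hpq
  · rw [hpq]
  · exact (key q p hq0 hq1 hp0 hp1 hpq).symm
end

section
/- Let Ω be the half-open real interval (0,1] with the induced order, and write 𝟙 for the element 1 of Ω. Let ℒ := { f : Ω → ℝ≥0∞ | f is Scott-continuous }, and let E := { f : Ω → ℝ≥0∞ | ∃ q ∈ [0,1] (real) and h ∈ ℒ with h(𝟙) ≤ 1 such that f(x) = 2·q + (1−q)·h(x) for all x ∈ Ω } (arithmetic in ℝ≥0∞, real scalars coerced). Then E = { f ∈ ℒ | f(𝟙) ≤ 2 and 2·f(𝟙) ≤ f(x) + 2 for all x ∈ Ω }; consequently, if D ⊆ E is nonempty and directed in the pointwise order, then the pointwise supremum x ↦ ⨆_{h ∈ D} h(x) belongs to E. -/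
open scoped ENNReal

/-- The half-open unit interval `(0,1]` with the induced order. -/
abbrev Omega : Type := Set.Ioc (0 : ℝ) 1

/-- The top element `1` of `Omega`. -/
def omegaOne : Omega := ⟨1, by norm_num⟩

/-- The subset `E` of the Scott-continuous functions `Ω → ℝ≥0∞`: those representable as a
convex combination `2q + (1-q)·h` of the constant function `2` and a function `h` bounded
by `1`. -/
def EE : Set (Omega → ℝ≥0∞) :=
  {f | ∃ q : ℝ, q ∈ Set.Icc (0 : ℝ) 1 ∧
    ∃ h : Omega → ℝ≥0∞, ScottContinuous h ∧ h omegaOne ≤ 1 ∧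
      ∀ x : Omega, f x = 2 * ENNReal.ofReal q + ENNReal.ofReal (1 - q) * h x}

lemma le_omegaOne (x : Omega) : x ≤ omegaOne := Subtype.coe_le_coe.mp x.2.2

lemma scott_aux {g : Omega → ℝ≥0∞} (hg : ScottContinuous g) (a b c : ℝ≥0∞) :
    ScottContinuous (fun x => a + b * (g x - c)) := by
  intro d hd1 hd2 x hx
  have h1 : sSup (g '' d) = g x := (hg hd1 hd2 hx).sSup_eq
  have h2 : sSup ((fun y => a + b * (g y - c)) '' d) = a + b * (g x - c) := by
    rw [sSup_image, ← ENNReal.add_biSup hd1]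
    congr 1
    calc ⨆ y ∈ d, b * (g y - c) = b * ((⨆ y ∈ d, g y) - c) := by
          simp_rw [← ENNReal.mul_iSup, ENNReal.iSup_sub]
      _ = b * (g x - c) := by rw [← sSup_image, h1]
  have := isLUB_sSup ((fun y => a + b * (g y - c)) '' d)
  rwa [h2] at this

lemma scott_const (c : ℝ≥0∞) : ScottContinuous (fun _ : Omega => c) := by
  intro d hd1 hd2 x hx
  rw [Set.Nonempty.image_const hd1]
  exact isLUB_singleton

/-- Characterisation of `E`: it consists exactly of the Scott-continuous functions `f` with
`f 𝟙 ≤ 2` and `2·f 𝟙 ≤ f x + 2` for all `x`; consequently `E` is closed under pointwise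
suprema of nonempty directed families. -/
theorem EE_characterisation :
    EE = {f : Omega → ℝ≥0∞ | ScottContinuous f ∧ f omegaOne ≤ 2 ∧
        ∀ x : Omega, 2 * f omegaOne ≤ f x + 2} ∧
    ∀ D : Set (Omega → ℝ≥0∞), D ⊆ EE → D.Nonempty → DirectedOn (· ≤ ·) D →
      (fun x : Omega => ⨆ h ∈ D, h x) ∈ EE := by
  have two_eq : (2 : ℝ≥0∞) = ENNReal.ofReal 2 := by simp
  have hEq : EE = {f : Omega → ℝ≥0∞ | ScottContinuous f ∧ f omegaOne ≤ 2 ∧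
      ∀ x : Omega, 2 * f omegaOne ≤ f x + 2} := by
    ext f
    constructor
    · rintro ⟨q, ⟨hq0, hq1⟩, h, hscott, hle, hf⟩
      have key : 2 * ENNReal.ofReal q + ENNReal.ofReal (1 - q) = ENNReal.ofReal (1 + q) := by
        rw [two_eq, ← ENNReal.ofReal_mul (by norm_num), ← ENNReal.ofReal_add (by linarith) (by linarith)]
        congr 1; ring
      have hbound : ∀ x : Omega, f x ≤ ENNReal.ofReal (1 + q) := by
        intro x
        rw [hf x, ← key]
        refine add_le_add_right ?_ _
        calc ENNReal.ofReal (1 - q) * h x ≤ ENNReal.ofReal (1 - q) * h omegaOne :=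
              mul_le_mul_right (hscott.monotone (le_omegaOne x)) _
          _ ≤ ENNReal.ofReal (1 - q) * 1 := mul_le_mul_right hle _
          _ = ENNReal.ofReal (1 - q) := mul_one _
      refine ⟨?_, ?_, ?_⟩
      · have : f = fun x => 2 * ENNReal.ofReal q + ENNReal.ofReal (1 - q) * (h x - 0) :=
          funext fun x => by rw [hf x, tsub_zero]
        rw [this]
        exact scott_aux hscott _ _ _
      · calc f omegaOne ≤ ENNReal.ofReal (1 + q) := hbound omegaOne
          _ ≤ ENNReal.ofReal 2 := ENNReal.ofReal_le_ofReal (by linarith)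
          _ = 2 := two_eq.symm
      · intro x
        calc 2 * f omegaOne ≤ 2 * ENNReal.ofReal (1 + q) :=
              mul_le_mul_right (hbound omegaOne) _
          _ = ENNReal.ofReal (2 * q) + 2 := by
              rw [two_eq, ← ENNReal.ofReal_mul (by norm_num),
                ← ENNReal.ofReal_add (by positivity) (by norm_num : (0:ℝ) ≤ 2)]
              congr 1; ring
          _ = 2 * ENNReal.ofReal q + 2 := by
              rw [two_eq, ← ENNReal.ofReal_mul (by norm_num)]
          _ ≤ f x + 2 := by
              refine add_le_add_left ?_ _
              rw [hf x]; exact le_self_add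
    · rintro ⟨hf, hf1, hf2⟩
      set T := f omegaOne with hT
      have hTne : T ≠ ∞ := ne_top_of_le_ne_top (by simp) hf1
      by_cases hle1 : T ≤ 1
      · exact ⟨0, ⟨le_rfl, zero_le_one⟩, f, hf, hle1, fun x => by simp⟩
      by_cases heq2 : T = 2
      · refine ⟨1, ⟨zero_le_one, le_rfl⟩, fun _ => 0, scott_const 0, zero_le_one, fun x => ?_⟩
        have h1 : f x ≤ 2 := heq2 ▸ hf.monotone (le_omegaOne x)
        have h2 : (2 : ℝ≥0∞) ≤ f x := by
          have := hf2 x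
          rw [heq2] at this
          have h4 : (2 : ℝ≥0∞) * 2 = 2 + 2 := by norm_num
          rw [h4] at this
          exact (ENNReal.add_le_add_iff_right (by simp : (2:ℝ≥0∞) ≠ ⊤)).1 this
        simp [le_antisymm h1 h2]
      · -- 1 < T < 2
        have h1T : 1 < T := lt_of_not_ge hle1
        have hT2 : T < 2 := lt_of_le_of_ne hf1 heq2
        set t := T.toReal with ht
        have hTt : T = ENNReal.ofReal t := (ENNReal.ofReal_toReal hTne).symm
        have h1t : 1 < t := by
          have := (ENNReal.toReal_lt_toReal (by simp) hTne).2 h1T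
          simpa using this
        have ht2 : t < 2 := by
          have := (ENNReal.toReal_lt_toReal hTne (by simp)).2 hT2
          simpa using this
        set q := t - 1 with hq
        have hq0 : 0 ≤ q := by simp [hq]; linarith
        have hq1 : q < 1 := by simp [hq]; linarith
        set B := ENNReal.ofReal (1 - q) with hB
        have hBne0 : B ≠ 0 := by
          simp only [hB, ne_eq, ENNReal.ofReal_eq_zero, not_le]; linarith
        have hBne : B ≠ ∞ := ENNReal.ofReal_ne_top
        set c := ENNReal.ofReal (2 * q) with hc
        have hc2 : c = 2 * ENNReal.ofReal q := by
          rw [hc, two_eq, ← ENNReal.ofReal_mul (by norm_num)]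
        have hcle : ∀ x : Omega, c ≤ f x := by
          intro x
          have h2T : 2 * T = c + 2 := by
            rw [hTt, two_eq, ← ENNReal.ofReal_mul (by norm_num), hc,
              ← ENNReal.ofReal_add (by positivity) (by norm_num : (0:ℝ) ≤ 2)]
            congr 1; rw [hq]; ring
          have := hf2 x
          rw [h2T] at this
          exact (ENNReal.add_le_add_iff_right (by simp)).1 this
        set h : Omega → ℝ≥0∞ := fun x => B⁻¹ * (f x - c) with hh
        have hhs : ScottContinuous h := by
          have := scott_aux hf 0 B⁻¹ c
          have he : (fun x => (0:ℝ≥0∞) + B⁻¹ * (f x - c)) = h :=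
            funext fun x => zero_add _
          rwa [he] at this
        have hTc : T - c = B := by
          rw [hTt, hc, hB, ← ENNReal.ofReal_sub _ (by positivity)]
          congr 1; rw [hq]; ring
        have hh1 : h omegaOne = 1 := by
          rw [hh]
          simp only [← hT, hTc]
          exact ENNReal.inv_mul_cancel hBne0 hBne
        refine ⟨q, ⟨hq0, hq1.le⟩, h, hhs, hh1.le, fun x => ?_⟩
        rw [hh, ← hB, ← hc2, ← mul_assoc, ENNReal.mul_inv_cancel hBne0 hBne, one_mul,
          add_tsub_cancel_of_le (hcle x)]
  refine ⟨hEq, ?_⟩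
  intro D hD hne hdir
  have hD' : ∀ f ∈ D, ScottContinuous f ∧ f omegaOne ≤ 2 ∧
      ∀ x : Omega, 2 * f omegaOne ≤ f x + 2 := by
    intro f hf
    have := hD hf
    rwa [hEq] at this
  rw [hEq]
  set g : Omega → ℝ≥0∞ := fun x => ⨆ h ∈ D, h x with hg
  have hgmono : Monotone g := by
    intro x y hxy
    exact iSup₂_le fun f hf =>
      le_trans ((hD' f hf).1.monotone hxy) (le_biSup (fun f => f y) hf)
  refine ⟨?_, ?_, ?_⟩
  · intro d hd1 hd2 x hx
    constructor
    · rintro _ ⟨y, hy, rfl⟩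
      exact hgmono (hx.1 hy)
    · intro u hu
      refine iSup₂_le fun f hf => ?_
      have hfx : f x = sSup (f '' d) := ((hD' f hf).1 hd1 hd2 hx).sSup_eq.symm
      rw [hfx]
      refine sSup_le ?_
      rintro _ ⟨y, hy, rfl⟩
      exact le_trans (le_biSup (fun f => f y) hf) (hu ⟨y, hy, rfl⟩)
  · exact iSup₂_le fun f hf => (hD' f hf).2.1
  · intro x
    rw [ENNReal.mul_iSup]
    refine iSup_le fun f => ?_
    rw [ENNReal.mul_iSup]
    refine iSup_le fun hf => ?_
    exact le_trans ((hD' f hf).2.2 x) (add_le_add_left (le_biSup (fun f => f x) hf) 2)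
end

section
/- Let P be a preorder and let ℒP := { f : P → ℝ≥0∞ | f is Scott-continuous }, with the pointwise order, pointwise addition, and pointwise scalar multiplication by ℝ≥0; for g ∈ ℒP set ‖g‖∞ := ⨆_{x ∈ P} g(x), and let 𝟙 denote the constant function with value 1. Let F : ℒP → ℝ≥0∞ be homogeneous (F(r•g) = r·F(g) for all r ∈ ℝ≥0 and g ∈ ℒP) and Scott-continuous in the sense that whenever D ⊆ ℒP is nonempty and directed in the pointwise order and f ∈ ℒP satisfies f(x) = ⨆_{g ∈ D} g(x) for all x ∈ P, then F(f) = ⨆_{g ∈ D} F(g). Then the following are equivalent: (a) F is strongly nonexpansive, i.e. F(f + g) ≤ F(f) + ‖g‖∞ for all f, g ∈ ℒP; (b) F(f + 𝟙) ≤ F(f) + 1 for all f ∈ ℒP. -/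
open scoped NNReal ENNReal

section aux
variable {P : Type*} [Preorder P]

lemma myScott_const (c : ℝ≥0∞) : ScottContinuous (fun _ : P => c) := by
  intro d hne hdir a ha
  constructor
  · rintro y ⟨x, hx, rfl⟩; exact le_rfl
  · intro y hy; exact hy ⟨hne.some, hne.some_mem, rfl⟩

lemma myScott_lub {f : P → ℝ≥0∞} (hf : ScottContinuous f) {d : Set P} (hne : d.Nonempty)
    (hdir : DirectedOn (· ≤ ·) d) {a : P} (ha : IsLUB d a) :
    f a = ⨆ x : d, f x := by
  have := (hf hne hdir ha).sSup_eq
  rw [← this, sSup_image]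
  exact (iSup_subtype'' d f).symm

lemma myScott_add {f g : P → ℝ≥0∞} (hf : ScottContinuous f) (hg : ScottContinuous g) :
    ScottContinuous (fun x => f x + g x) := by
  intro d hne hdir a ha
  rw [isLUB_iff_sSup_eq, sSup_image, ← iSup_subtype'' d (fun x => f x + g x)]
  have : Nonempty d := hne.to_subtype
  show (⨆ i : d, (f i + g i)) = f a + g a
  rw [myScott_lub hf hne hdir ha, myScott_lub hg hne hdir ha]
  exact Eq.symm <| ENNReal.iSup_add_iSup (fun (i j : d) => by
    obtain ⟨k, hk, hik, hjk⟩ := hdir i i.2 j j.2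
    exact ⟨⟨k, hk⟩, add_le_add (hf.monotone hik) (hg.monotone hjk)⟩)

lemma myScott_mul {f : P → ℝ≥0∞} (hf : ScottContinuous f) (c : ℝ≥0∞) :
    ScottContinuous (fun x => c * f x) := by
  intro d hne hdir a ha
  rw [isLUB_iff_sSup_eq, sSup_image, ← iSup_subtype'' d (fun x => c * f x)]
  have : Nonempty d := hne.to_subtype
  show (⨆ i : d, c * f i) = c * f a
  rw [myScott_lub hf hne hdir ha, ENNReal.mul_iSup]

end aux

/-- For a Scott-continuous homogeneous functional `F` on the Scott-continuous functions
`P → ℝ≥0∞`, strong nonexpansiveness `F(f + g) ≤ F(f) + ‖g‖∞` is equivalent to the single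
condition `F(f + 𝟙) ≤ F(f) + 1`. -/
theorem strongly_nonexpansive_iff {P : Type*} [Preorder P]
    (F : (P → ℝ≥0∞) → ℝ≥0∞)
    (hhom : ∀ (r : ℝ≥0) (g : P → ℝ≥0∞), ScottContinuous g →
      F (fun x => (r : ℝ≥0∞) * g x) = (r : ℝ≥0∞) * F g)
    (hscott : ∀ D : Set (P → ℝ≥0∞), (∀ g ∈ D, ScottContinuous g) → D.Nonempty →
      DirectedOn (· ≤ ·) D → ∀ f : P → ℝ≥0∞, ScottContinuous f →
      (∀ x : P, f x = ⨆ g ∈ D, g x) → F f = ⨆ g ∈ D, F g) :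
    (∀ f g : P → ℝ≥0∞, ScottContinuous f → ScottContinuous g →
      F (fun x => f x + g x) ≤ F f + ⨆ x : P, g x) ↔
    (∀ f : P → ℝ≥0∞, ScottContinuous f → F (fun x => f x + 1) ≤ F f + 1) := by
  constructor
  · intro h f hf
    calc F (fun x => f x + 1) ≤ F f + ⨆ _ : P, (1 : ℝ≥0∞) :=
          h f (fun _ => 1) hf (myScott_const 1)
      _ ≤ F f + 1 := add_le_add_right (iSup_le fun _ => le_rfl) _
  · intro h f g hf hg
    -- monotonicity of F
    have hmono : ∀ u v : P → ℝ≥0∞, ScottContinuous u → ScottContinuous v →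
        u ≤ v → F u ≤ F v := by
      intro u v hu hv huv
      have hle : ∀ w ∈ ({u, v} : Set (P → ℝ≥0∞)), w ≤ v := by
        rintro w hw
        rcases hw with h1 | h1
        · rw [h1]; exact huv
        · rw [h1]
      have hD : F v = ⨆ w ∈ ({u, v} : Set (P → ℝ≥0∞)), F w := by
        refine hscott {u, v} ?_ ⟨u, by simp⟩ ?_ v hv ?_
        · rintro w hw
          rcases hw with h1 | h1
          · rw [h1]; exact hu
          · rw [h1]; exact hv
        · intro w hw z hz
          exact ⟨v, by simp, hle w hw, hle z hz⟩
        · intro x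
          refine le_antisymm (le_biSup (f := fun w : P → ℝ≥0∞ => w x)
            (show v ∈ ({u, v} : Set (P → ℝ≥0∞)) by simp)) ?_
          exact iSup₂_le fun w hw => hle w hw x
      rw [hD]
      exact le_biSup _ (by simp)
    set M := ⨆ x : P, g x with hM
    rcases eq_or_ne M ⊤ with htop | hfin
    · rw [htop, add_top]; exact le_top
    lift M to ℝ≥0 using hfin with r hr
    rcases eq_or_ne r 0 with rfl | hr0
    · have hg0 : ∀ x, g x = 0 := fun x => le_antisymm (by
        have := le_iSup g x
        rw [← hM] at this; simpa using this) bot_le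
      have : (fun x => f x + g x) = f := by funext x; simp [hg0 x]
      rw [this]
      exact le_add_right le_rfl
    -- main case: 0 < r < ∞
    have hrne : (r : ℝ≥0∞) ≠ 0 := by exact_mod_cast hr0
    have hrnetop : (r : ℝ≥0∞) ≠ ⊤ := ENNReal.coe_ne_top
    have hgle : ∀ x, g x ≤ (r : ℝ≥0∞) := fun x => by
      have := le_iSup g x; rw [← hM] at this; exact this
    set u : P → ℝ≥0∞ := fun x => ((r⁻¹ : ℝ≥0) : ℝ≥0∞) * f x with hu
    have hus : ScottContinuous u := myScott_mul hf _
    have key : (fun x => f x + (r : ℝ≥0∞)) = fun x => (r : ℝ≥0∞) * (u x + 1) := by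
      funext x
      rw [hu]
      rw [mul_add, mul_one, ENNReal.coe_inv hr0, ← mul_assoc,
        ENNReal.mul_inv_cancel hrne hrnetop, one_mul]
    calc F (fun x => f x + g x)
        ≤ F (fun x => f x + (r : ℝ≥0∞)) := by
          refine hmono _ _ (myScott_add hf hg) (myScott_add hf (myScott_const _)) ?_
          intro x; exact add_le_add_right (hgle x) _
      _ = (r : ℝ≥0∞) * F (fun x => u x + 1) := by
          rw [key]; exact hhom r _ (myScott_add hus (myScott_const 1))
      _ ≤ (r : ℝ≥0∞) * (F u + 1) := by
          exact mul_le_mul_right (h u hus) _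
      _ = (r : ℝ≥0∞) * F u + (r : ℝ≥0∞) := by rw [mul_add, mul_one]
      _ = F f + (r : ℝ≥0∞) := by
          rw [hu, hhom r⁻¹ f hf, ← mul_assoc, ENNReal.coe_inv hr0,
            ENNReal.mul_inv_cancel hrne hrnetop, one_mul]
end
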